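/- Let H be a graph and let 𝓕_H be the family of bipartite clique quotients of H. Let Γ be a graph whose complement has chromatic number k, and let F be a bipartite graph on k vertices containing no member of 𝓕_H as a subgraph. Then Γ has a subgraph G with at least e(Γ)·e(F)/C(k,2) edges containing no induced copy of H. -/

import Mathlib

open scoped Classical
open Finset SimpleGraph

/-!
Colour `Γᶜ` properly with `k` colours, so that the colour classes are cliques of `Γ`, and for a
permutation `σ` of the colours keep the edges of `Γ` inside a class or between two classes whose
`σ`-images are adjacent in `F`. An induced copy of `H` in such a subgraph has a clique quotient
(the colour classes it meets) that embeds in `F`, and is then bipartite since `F` is; so none of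
these subgraphs contains an induced `H`. An edge of `Γ` between distinct classes survives for a
fraction `e(F) / C(k,2)` of all permutations, because `Equiv.Perm` acts transitively on pairs of
distinct colours; averaging over `σ` gives the edge bound.
-/

/-- `Q` is a clique quotient of `H`: the fibers of some surjection `g` are cliques of `H`,
and `Q` has an edge `{i,j}` exactly when some vertex of the fiber of `i` is adjacent
in `H` to some vertex of the fiber of `j`. -/
def IsCliqueQuotient {W : Type*} (H : SimpleGraph W) {k : ℕ} (Q : SimpleGraph (Fin k)) : Prop :=
  ∃ g : W → Fin k, Function.Surjective g ∧
    (∀ a b, g a = g b → a ≠ b → H.Adj a b) ∧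
    (∀ i j, Q.Adj i j ↔ i ≠ j ∧ ∃ a b, g a = i ∧ g b = j ∧ H.Adj a b)

namespace SimpleGraph

variable {V W α : Type*}

def restrictAlong (Γ : SimpleGraph V) (c : V → α) (F : SimpleGraph α) : SimpleGraph V where
  Adj u v := Γ.Adj u v ∧ (c u = c v ∨ F.Adj (c u) (c v))
  symm.symm _ _ h := ⟨h.1.symm, h.2.imp Eq.symm fun h => h.symm⟩
  loopless.irrefl u h := Γ.loopless.irrefl u h.1

@[simp]
lemma restrictAlong_adj {Γ : SimpleGraph V} {c : V → α} {F : SimpleGraph α} {u v : V} :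
    (Γ.restrictAlong c F).Adj u v ↔ Γ.Adj u v ∧ (c u = c v ∨ F.Adj (c u) (c v)) :=
  Iff.rfl

lemma restrictAlong_le (Γ : SimpleGraph V) (c : V → α) (F : SimpleGraph α) :
    Γ.restrictAlong c F ≤ Γ :=
  fun _ _ h => h.1

lemma exists_cliqueQuotient_injective_hom [Fintype W] {H : SimpleGraph W} {F : SimpleGraph α}
    (g : W → α) (hfib : ∀ a b, g a = g b → a ≠ b → H.Adj a b)
    (hadj : ∀ a b, H.Adj a b → g a ≠ g b → F.Adj (g a) (g b)) :
    ∃ (m : ℕ) (Q : SimpleGraph (Fin m)), IsCliqueQuotient H Q ∧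
      ∃ f : Q →g F, Function.Injective f := by
  let e := Fintype.equivFin (Set.range g)
  let q : W → Fin _ := e ∘ Set.rangeFactorization g
  let f : Fin _ → α := Subtype.val ∘ e.symm
  have hfq (a : W) : f (q a) = g a := by simp [f, q]
  have hf : f.Injective := Subtype.val_injective.comp e.symm.injective
  refine ⟨_, fromRel fun i j => ∃ a b, q a = i ∧ q b = j ∧ H.Adj a b,
    ⟨q, e.surjective.comp Set.rangeFactorization_surjective, ?_, ?_⟩, ⟨⟨f, ?_⟩, hf⟩⟩
  · intro a b h hne
    exact hfib a b (by rw [← hfq, h, hfq]) hne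
  · intro i j
    simp only [fromRel_adj]
    refine and_congr_right fun _ => or_iff_left_of_imp ?_
    rintro ⟨a, b, ha, hb, hab⟩
    exact ⟨b, a, hb, ha, hab.symm⟩
  · rintro _ _ ⟨hne, ⟨a, b, rfl, rfl, hab⟩ | ⟨a, b, rfl, rfl, hab⟩⟩
    · rw [hfq, hfq]
      exact hadj a b hab (hfq a ▸ hfq b ▸ hf.ne hne)
    · rw [hfq, hfq]
      exact (hadj a b hab (hfq a ▸ hfq b ▸ hf.ne hne.symm)).symm

lemma exists_cliqueQuotient_of_embedding_restrictAlong [Fintype W] {Γ : SimpleGraph V}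
    {H : SimpleGraph W} {c : V → α} {F : SimpleGraph α}
    (hc : ∀ u v, c u = c v → u ≠ v → Γ.Adj u v) (φ : H ↪g Γ.restrictAlong c F) :
    ∃ (m : ℕ) (Q : SimpleGraph (Fin m)), IsCliqueQuotient H Q ∧
      ∃ f : Q →g F, Function.Injective f :=
  exists_cliqueQuotient_injective_hom (c ∘ φ)
    (fun _ _ h hne => φ.map_adj_iff.mp ⟨hc _ _ h (φ.injective.ne hne), .inl h⟩)
    (fun _ _ hab hne => (φ.map_adj_iff.mpr hab).2.resolve_left hne)

lemma sum_card_edgeFinset_eq_sum_card_filter [Fintype V] {ι : Type*} (s : Finset ι)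
    {Γ : SimpleGraph V} [Fintype Γ.edgeSet] (G : ι → SimpleGraph V) (hG : ∀ i, G i ≤ Γ) :
    ∑ i ∈ s, #(G i).edgeFinset = ∑ e ∈ Γ.edgeFinset, #{i ∈ s | e ∈ (G i).edgeSet} := by
  calc _ = ∑ i ∈ s, #(bipartiteAbove (fun i e => e ∈ (G i).edgeSet) Γ.edgeFinset i) := by
        refine sum_congr rfl fun i _ => congrArg card ?_
        ext e
        simpa [bipartiteAbove] using fun h => edgeSet_mono (hG i) h
    _ = _ := sum_card_bipartiteAbove_eq_sum_card_bipartiteBelow _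

lemma exists_card_edgeFinset_mul_le [Fintype V] {ι : Type*} [Fintype ι] [Nonempty ι]
    {Γ : SimpleGraph V} (G : ι → SimpleGraph V) (hG : ∀ i, G i ≤ Γ) {a b : ℕ}
    (h : ∀ e ∈ Γ.edgeFinset, Fintype.card ι * a ≤ #{i | e ∈ (G i).edgeSet} * b) :
    ∃ i, #Γ.edgeFinset * a ≤ #(G i).edgeFinset * b := by
  obtain ⟨i, -, hi⟩ := exists_le_of_sum_le (s := univ) (f := fun _ => #Γ.edgeFinset * a)
    (g := fun i => #(G i).edgeFinset * b) univ_nonempty <| calc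
      ∑ _ : ι, #Γ.edgeFinset * a = ∑ _ ∈ Γ.edgeFinset, Fintype.card ι * a := by
        simp only [sum_const, card_univ, smul_eq_mul]
        ring
      _ ≤ ∑ e ∈ Γ.edgeFinset, #{i | e ∈ (G i).edgeSet} * b := sum_le_sum h
      _ = ∑ i, #(G i).edgeFinset * b := by
        rw [← sum_mul, ← sum_mul, sum_card_edgeFinset_eq_sum_card_filter _ G hG]
  exact ⟨i, hi⟩

lemma card_perm_adj_eq_of_ne [Fintype α] (F : SimpleGraph α) {i j i' j' : α} (hij : i ≠ j)
    (hij' : i' ≠ j') :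
    #{σ : Equiv.Perm α | F.Adj (σ i) (σ j)} = #{σ : Equiv.Perm α | F.Adj (σ i') (σ j')} := by
  obtain ⟨τ, hi, hj⟩ :=
    MulAction.is_two_pretransitive_iff.mp (Equiv.Perm.isMultiplyPretransitive α 2) hij' hij
  rw [Equiv.Perm.smul_def] at hi hj
  refine card_equiv (Equiv.mulRight τ) fun σ => ?_
  simp only [mem_filter, mem_univ, true_and, Equiv.coe_mulRight, Equiv.Perm.mul_apply, hi, hj]

lemma card_perm_adj_mul_choose_two [Fintype α] (F : SimpleGraph α) {i j : α} (hij : i ≠ j) :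
    #{σ : Equiv.Perm α | F.Adj (σ i) (σ j)} * (Fintype.card α).choose 2 =
      (Fintype.card α).factorial * #F.edgeFinset := by
  have hpair : ∀ e ∈ (⊤ : SimpleGraph α).edgeFinset,
      #{σ : Equiv.Perm α | e ∈ (F.comap σ).edgeSet} = #{σ : Equiv.Perm α | F.Adj (σ i) (σ j)} := by
    intro e he
    induction e using Sym2.ind with
    | _ i' j' =>
      rw [mem_edgeFinset, mem_edgeSet, top_adj] at he
      simp only [mem_edgeSet, comap_adj]
      exact card_perm_adj_eq_of_ne F he hij
  calc _ = ∑ e ∈ (⊤ : SimpleGraph α).edgeFinset,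
          #{σ : Equiv.Perm α | e ∈ (F.comap σ).edgeSet} := by
        rw [sum_congr rfl hpair, sum_const, card_edgeFinset_top_eq_card_choose_two, smul_eq_mul,
          mul_comm]
    _ = ∑ σ : Equiv.Perm α, #(F.comap σ).edgeFinset :=
        (sum_card_edgeFinset_eq_sum_card_filter univ (fun σ : Equiv.Perm α => F.comap σ)
          fun _ => le_top).symm
    _ = _ := by
        simp only [(Iso.comap _ F).card_edgeFinset_eq, sum_const, card_univ, Fintype.card_perm,
          smul_eq_mul]

lemma exists_perm_card_edgeFinset_restrictAlong [Fintype V] [Fintype α] (Γ : SimpleGraph V)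
    (c : V → α) (F : SimpleGraph α) :
    ∃ σ : Equiv.Perm α, #Γ.edgeFinset * #F.edgeFinset ≤
      #(Γ.restrictAlong (σ ∘ c) F).edgeFinset * (Fintype.card α).choose 2 := by
  refine exists_card_edgeFinset_mul_le _ (fun _ => restrictAlong_le ..) fun e he => ?_
  induction e using Sym2.ind with
  | _ u v =>
    rw [mem_edgeFinset, mem_edgeSet] at he
    rw [Fintype.card_perm]
    by_cases huv : c u = c v
    · have hall : ({σ : Equiv.Perm α | s(u, v) ∈ (Γ.restrictAlong (σ ∘ c) F).edgeSet} :
          Finset (Equiv.Perm α)) = univ :=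
        filter_true_of_mem fun σ _ => ⟨he, .inl (congrArg σ huv)⟩
      rw [hall, card_univ, Fintype.card_perm]
      exact Nat.mul_le_mul_left _ (by simpa using F.card_edgeFinset_le_card_choose_two)
    · have hadj : ({σ : Equiv.Perm α | s(u, v) ∈ (Γ.restrictAlong (σ ∘ c) F).edgeSet} :
          Finset (Equiv.Perm α)) = ({σ | F.Adj (σ (c u)) (σ (c v))} : Finset (Equiv.Perm α)) :=
        filter_congr fun σ _ => by simp [he, huv]
      rw [hadj, card_perm_adj_mul_choose_two F huv]

end SimpleGraph

theorem stmt_13 {V W : Type*} [Fintype V] [Fintype W] (Γ : SimpleGraph V)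
    (H : SimpleGraph W) (k : ℕ)
    (hchi : Γᶜ.chromaticNumber = k)
    (F : SimpleGraph (Fin k)) (hFbip : F.Colorable 2)
    (hFfree : ∀ (kq : ℕ) (Q : SimpleGraph (Fin kq)), IsCliqueQuotient H Q → Q.Colorable 2 →
      ¬ ∃ f : Q →g F, Function.Injective f) :
    ∃ G : SimpleGraph V, G ≤ Γ ∧
      (Γ.edgeFinset.card : ℝ) * F.edgeFinset.card / (k.choose 2) ≤ G.edgeFinset.card ∧
      IsEmpty (H ↪g G) := by
  obtain ⟨c⟩ : Γᶜ.Colorable k := chromaticNumber_le_iff_colorable.mp hchi.le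
  have hc : ∀ u v, c u = c v → u ≠ v → Γ.Adj u v := fun u v h hne =>
    not_not.mp fun hΓ => c.valid ((compl_adj Γ u v).mpr ⟨hne, hΓ⟩) h
  obtain ⟨σ, hσ⟩ := exists_perm_card_edgeFinset_restrictAlong Γ c F
  rw [Fintype.card_fin] at hσ
  refine ⟨Γ.restrictAlong (σ ∘ c) F, restrictAlong_le .., ?_, ⟨fun φ => ?_⟩⟩
  · exact div_le_of_le_mul₀ (by positivity) (by positivity) (by exact_mod_cast hσ)
  · obtain ⟨m, Q, hQ, f, hf⟩ := exists_cliqueQuotient_of_embedding_restrictAlong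
      (fun u v h => hc u v (σ.injective h)) φ
    exact hFfree m Q hQ (hFbip.of_hom f) ⟨f, hf⟩
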